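/- arXiv:q-alg/9705010 — 4 statements merged into one kernel-verified Lean document; each statement's English description precedes it below -/
import Mathlib

section
/- The Cherednik–Dunkl operators d_i(β) = β^{-1} z_i ∂/∂z_i + (n−i) + Σ_{j>i} θ_{ji}(K_{ij}−1) − Σ_{j<i} θ_{ij}(K_{ij}−1), acting on Laurent polynomials in z_1,…,z_n, pairwise commute: d_i(β) d_j(β) = d_j(β) d_i(β) for all i, j. -/
noncomputable section

/-- The ring of Laurent polynomials `ℂ[z_1^{±1},…,z_n^{±1}]`, as the monoid algebra of
`Fin n → ℤ` over `ℂ`. -/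
abbrev Lpoly (n : ℕ) := AddMonoidAlgebra ℂ (Fin n → ℤ)

/-- The Laurent monomial `z^m`. -/
def mono {n : ℕ} (m : Fin n → ℤ) : Lpoly n := AddMonoidAlgebra.single m 1

/-- The Euler operator `D_i = z_i ∂/∂z_i`, acting on monomials by `z^m ↦ m_i z^m`. -/
def Dop {n : ℕ} (i : Fin n) : Lpoly n →ₗ[ℂ] Lpoly n :=
  (Finsupp.lsum ℂ fun m => LinearMap.toSpanSingleton ℂ (Lpoly n) (((m i : ℂ)) • mono m)) ∘ₗ
    (AddMonoidAlgebra.coeffLinearEquiv ℂ).toLinearMap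

/-- The coordinate permutation operator `K_{ij}`, permuting the variables `z_i, z_j`. -/
def Kop {n : ℕ} (i j : Fin n) : Lpoly n →ₗ[ℂ] Lpoly n :=
  AddMonoidAlgebra.mapDomainLinearMap ℂ ℂ (fun m : Fin n → ℤ => m ∘ Equiv.swap i j)

/-- The Cherednik–Dunkl operator
`d_i(β) = β⁻¹ D_i + (n−i) + Σ_{j>i} θ_{ji}(K_{ij}−1) − Σ_{j<i} θ_{ij}(K_{ij}−1)`
(0-indexed: the constant is `n − i − 1` for `i : Fin n`), where
`θ i j : Lpoly n →ₗ[ℂ] Lpoly n` is the divided-difference operator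
`z_i (K_{ij} − 1)/(z_i − z_j)`, given as a parameter characterized by the identity
`(z_i − z_j) · (θ i j f) = z_i · (K_{ij} f − f)`. -/
def CDop {n : ℕ} (β : ℂ) (θ : Fin n → Fin n → (Lpoly n →ₗ[ℂ] Lpoly n)) (i : Fin n) :
    Lpoly n →ₗ[ℂ] Lpoly n :=
  β⁻¹ • Dop i + (((n : ℂ) - (i : ℕ) - 1)) • (LinearMap.id : Lpoly n →ₗ[ℂ] Lpoly n)
    + ∑ j ∈ Finset.univ.filter (fun j => i < j), θ j i
    - ∑ j ∈ Finset.univ.filter (fun j => j < i), θ i j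

/-!
Write `d_i = β⁻¹ D_i + c_i + H_i`, where `H_i = Σ_j η_ij` with `η_ij = θ_ji` for `i < j` and
`η_ij = -θ_ij` for `j < i`. Since the `D_i` commute with each other, `[d_i, d_j] = 0` follows from
`[D_i, H_j] + [H_i, D_j] = 0` and `[H_i, H_j] = 0`. The first holds because `D_p` commutes with
`θ_ab` for `p ∉ {a, b}` and `D_a + D_b` commutes with `θ_ab` (Leibniz rule applied to the defining
identity of `θ_ab`). In the second, all brackets of `η`'s with disjoint indices vanish, and what
is left is, for each `k ∉ {i, j}`, a three-index relation among the `θ`'s. All these identities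
are checked after multiplying by the differences `z_a - z_b`, which are nonzero divisors in the
domain of Laurent polynomials; the `θ`'s are then eliminated using their defining identity and
`K_ab θ_cd = θ_{σc,σd} K_ab`, `σ = (a b)`.
-/

attribute [local instance] LieRing.ofAssociativeRing

lemma commute_smul_add_smul_one_add {R A : Type*} [CommRing R] [Ring A] [Algebra R A]
    {D₁ D₂ H₁ H₂ : A} (t c₁ c₂ : R) (hD : Commute D₁ D₂) (hDH : ⁅D₁, H₂⁆ + ⁅H₁, D₂⁆ = 0)
    (hH : Commute H₁ H₂) : Commute (t • D₁ + c₁ • 1 + H₁) (t • D₂ + c₂ • 1 + H₂) := by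
  rw [commute_iff_lie_eq] at *
  simp only [Ring.lie_def] at *
  simp only [add_mul, mul_add, smul_mul_assoc, mul_smul_comm, one_mul, mul_one]
  linear_combination (norm := module) (t * t) • hD + t • hDH + hH

section LaurentPolynomial

open AddMonoidAlgebra

variable {n : ℕ}

def X (i : Fin n) : Lpoly n := mono (Pi.single i 1)

lemma X_sub_X_ne_zero {i j : Fin n} (h : i ≠ j) : X i - X j ≠ 0 := by
  rw [sub_ne_zero, X, X, mono, mono, Ne, single_left_inj one_ne_zero]
  intro he
  simpa [h] using congrFun he i

lemma Kop_single (a b : Fin n) (m : Fin n → ℤ) (c : ℂ) :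
    Kop a b (single m c) = single (m ∘ Equiv.swap a b) c :=
  mapDomainLinearMap_single ..

lemma Kop_mul (a b : Fin n) (f g : Lpoly n) : Kop a b (f * g) = Kop a b f * Kop a b g :=
  mapDomain_mul (AddMonoidHom.mk' (fun m => m ∘ Equiv.swap a b) fun _ _ => rfl) f g

lemma Kop_X (a b c : Fin n) : Kop a b (X c) = X (Equiv.swap a b c) := by
  rw [X, X, mono, mono, Kop_single]
  congr 1
  ext x
  simp [Pi.single_apply, Equiv.swap_apply_eq_iff]

lemma Kop_Kop (a b c d : Fin n) (f : Lpoly n) :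
    Kop a b (Kop c d f) = Kop (Equiv.swap a b c) (Equiv.swap a b d) (Kop a b f) := by
  change (Kop a b ∘ₗ Kop c d) f = (Kop _ _ ∘ₗ Kop a b) f
  simp only [Kop, ← mapDomainLinearMap_comp]
  congr 2
  ext m x
  simp [Equiv.swap_apply_apply]

lemma Dop_single (i : Fin n) (m : Fin n → ℤ) (c : ℂ) :
    Dop i (single m c) = single m ((m i : ℂ) * c) := by
  simp [Dop, mono, mul_comm]

lemma Dop_X_self (i : Fin n) : Dop i (X i) = X i := by
  simp [X, mono, Dop_single]

lemma Dop_X_of_ne {i j : Fin n} (h : i ≠ j) : Dop i (X j) = 0 := by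
  simp [X, mono, Dop_single, h]

lemma Dop_mul (i : Fin n) (f g : Lpoly n) : Dop i (f * g) = Dop i f * g + f * Dop i g := by
  induction f using induction_linear with
  | zero => simp
  | add f₁ f₂ h₁ h₂ => simp only [add_mul, map_add, h₁, h₂]; abel
  | single a c =>
    induction g using induction_linear with
    | zero => simp
    | add g₁ g₂ h₁ h₂ => simp only [mul_add, map_add, h₁, h₂]; abel
    | single b d =>
      simp only [single_mul_single, Dop_single, ← single_add, Pi.add_apply]
      push_cast
      ring_nf

lemma Dop_mul_Kop (p a b : Fin n) : Dop p * Kop a b = Kop a b * Dop (Equiv.swap a b p) := by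
  ext m : 2
  simp [Dop_single, Kop_single]

lemma commute_Dop (i j : Fin n) : Commute (Dop i) (Dop j) := by
  ext m : 2
  simp [Dop_single, mul_comm]

end LaurentPolynomial

def IsDividedDifference {n : ℕ} (θ : Fin n → Fin n → (Lpoly n →ₗ[ℂ] Lpoly n)) : Prop :=
  ∀ i j : Fin n, i ≠ j → ∀ f : Lpoly n, (X i - X j) * θ i j f = X i * (Kop i j f - f)

namespace IsDividedDifference

open Equiv

variable {n : ℕ} {θ : Fin n → Fin n → (Lpoly n →ₗ[ℂ] Lpoly n)} (hθ : IsDividedDifference θ)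
include hθ

lemma Kop_theta {a b c d : Fin n} (hcd : c ≠ d) (f : Lpoly n) :
    Kop a b (θ c d f) = θ (swap a b c) (swap a b d) (Kop a b f) := by
  have hcd' : swap a b c ≠ swap a b d := (swap a b).injective.ne hcd
  apply mul_left_cancel₀ (X_sub_X_ne_zero hcd')
  calc (X (swap a b c) - X (swap a b d)) * Kop a b (θ c d f)
      = Kop a b ((X c - X d) * θ c d f) := by rw [Kop_mul, map_sub, Kop_X, Kop_X]
    _ = X (swap a b c) * (Kop (swap a b c) (swap a b d) (Kop a b f) - Kop a b f) := by
        rw [hθ c d hcd f, Kop_mul, map_sub, Kop_X, Kop_Kop]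
    _ = _ := (hθ _ _ hcd' _).symm

lemma commute_Dop_theta {p a b : Fin n} (hab : a ≠ b) (hpa : p ≠ a) (hpb : p ≠ b) :
    Commute (Dop p) (θ a b) := by
  refine LinearMap.ext fun f => mul_left_cancel₀ (X_sub_X_ne_zero hab) ?_
  have hD := congrArg (Dop p) (hθ a b hab f)
  rw [Dop_mul, Dop_mul, map_sub, map_sub, Dop_X_of_ne hpa, Dop_X_of_ne hpb,
    ← LinearMap.comp_apply (Dop p) (Kop a b), ← Module.End.mul_eq_comp, Dop_mul_Kop,
    swap_apply_of_ne_of_ne hpa hpb] at hD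
  simp only [Module.End.mul_apply]
  linear_combination hD - hθ a b hab (Dop p f)

lemma commute_Dop_add_Dop_theta {a b : Fin n} (hab : a ≠ b) :
    Commute (Dop a + Dop b) (θ a b) := by
  refine LinearMap.ext fun f => mul_left_cancel₀ (X_sub_X_ne_zero hab) ?_
  have hDa := congrArg (Dop a) (hθ a b hab f)
  have hDb := congrArg (Dop b) (hθ a b hab f)
  simp only [Dop_mul, map_sub, Dop_X_self, Dop_X_of_ne hab, Dop_X_of_ne hab.symm,
    ← LinearMap.comp_apply (Dop _) (Kop a b), ← Module.End.mul_eq_comp, Dop_mul_Kop,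
    swap_apply_left, swap_apply_right] at hDa hDb
  simp only [Module.End.mul_apply, LinearMap.add_apply, map_add]
  linear_combination hDa + hDb - hθ a b hab f - hθ a b hab (Dop a f) - hθ a b hab (Dop b f)

lemma mul_theta_theta {a b c d : Fin n} (hab : a ≠ b) (hcd : c ≠ d) (f : Lpoly n) :
    (X a - X b) * (X (swap a b c) - X (swap a b d)) * (X c - X d) * θ a b (θ c d f)
      = X a * ((X c - X d) * X (swap a b c) * (Kop a b (Kop c d f) - Kop a b f)
        - (X (swap a b c) - X (swap a b d)) * X c * (Kop c d f - f)) := by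
  have hcd' : swap a b c ≠ swap a b d := (swap a b).injective.ne hcd
  have hab_θ := hθ a b hab (θ c d f)
  have hcd_θ := hθ _ _ hcd' (Kop a b f)
  rw [hθ.Kop_theta hcd] at hab_θ
  rw [← Kop_Kop] at hcd_θ
  linear_combination (X (swap a b c) - X (swap a b d)) * (X c - X d) * hab_θ
    + X a * (X c - X d) * hcd_θ - X a * (X (swap a b c) - X (swap a b d)) * hθ c d hcd f

lemma commute_theta_theta {a b c d : Fin n} (hab : a ≠ b) (hcd : c ≠ d)
    (hac : a ≠ c) (had : a ≠ d) (hbc : b ≠ c) (hbd : b ≠ d) : Commute (θ a b) (θ c d) := by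
  refine LinearMap.ext fun f => mul_left_cancel₀ (mul_ne_zero
    (pow_ne_zero 2 (X_sub_X_ne_zero hab)) (pow_ne_zero 2 (X_sub_X_ne_zero hcd))) ?_
  have hab_cd := hθ.mul_theta_theta hab hcd f
  have hcd_ab := hθ.mul_theta_theta hcd hab f
  have hKK := Kop_Kop c d a b f
  rw [swap_apply_of_ne_of_ne hac.symm hbc.symm, swap_apply_of_ne_of_ne had.symm hbd.symm]
    at hab_cd
  rw [swap_apply_of_ne_of_ne hac had, swap_apply_of_ne_of_ne hbc hbd] at hcd_ab hKK
  simp only [Module.End.mul_apply]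
  linear_combination (X a - X b) * hab_cd - (X c - X d) * hcd_ab
    - X a * X c * (X a - X b) * (X c - X d) * hKK

lemma theta_lie_triple {i j k : Fin n} (hij : i ≠ j) (hik : i ≠ k) (hjk : j ≠ k) :
    ⁅θ j i, θ j k⁆ + ⁅θ k i, θ j i⁆ + ⁅θ k i, θ j k⁆ = 0 := by
  refine LinearMap.ext fun f => mul_left_cancel₀ (mul_ne_zero (mul_ne_zero
    (X_sub_X_ne_zero hij) (X_sub_X_ne_zero hik)) (X_sub_X_ne_zero hjk)) ?_
  have e₁ := hθ.mul_theta_theta hij.symm hjk f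
  have e₂ := hθ.mul_theta_theta hjk hij.symm f
  have e₃ := hθ.mul_theta_theta hik.symm hij.symm f
  have e₄ := hθ.mul_theta_theta hij.symm hik.symm f
  have e₅ := hθ.mul_theta_theta hik.symm hjk f
  have e₆ := hθ.mul_theta_theta hjk hik.symm f
  have k₃₆ := Kop_Kop k i j i f
  have k₆₁ := Kop_Kop j k k i f
  have k₂₅ := Kop_Kop j k j i f
  have k₅₄ := Kop_Kop k i j k f
  simp only [swap_apply_left, swap_apply_right, swap_apply_of_ne_of_ne, hij, hik, hjk, hij.symm,
    hik.symm, hjk.symm, ne_eq, not_false_eq_true] at e₁ e₂ e₃ e₄ e₅ e₆ k₃₆ k₆₁ k₂₅ k₅₄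
  -- the six words `K_ab K_cd f` reduce to the two 3-cycles on `i, j, k`
  rw [k₃₆, k₆₁] at e₃
  rw [k₆₁] at e₆
  rw [k₂₅, k₅₄] at e₂
  rw [k₅₄] at e₅
  simp only [Ring.lie_def, LinearMap.add_apply, LinearMap.sub_apply, Module.End.mul_apply,
    LinearMap.zero_apply]
  linear_combination -e₁ - e₂ + e₃ + e₄ + e₅ - e₆

end IsDividedDifference

section DunklPart

variable {n : ℕ} (θ : Fin n → Fin n → (Lpoly n →ₗ[ℂ] Lpoly n))

-- `dunklTerm θ i j` and `dunklPart θ i` are the `η_ij` and `H_i` of the header.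
def dunklTerm (i j : Fin n) : Lpoly n →ₗ[ℂ] Lpoly n :=
  if i < j then θ j i else if j < i then -θ i j else 0

def dunklPart (i : Fin n) : Lpoly n →ₗ[ℂ] Lpoly n :=
  ∑ j, dunklTerm θ i j

lemma dunklTerm_self (i : Fin n) : dunklTerm θ i i = 0 := by
  simp [dunklTerm]

lemma dunklTerm_swap (i j : Fin n) : dunklTerm θ j i = -dunklTerm θ i j := by
  unfold dunklTerm
  split_ifs <;> first | order | simp

variable {θ} in
lemma Commute.dunklTerm {x : Lpoly n →ₗ[ℂ] Lpoly n} {i j : Fin n} (hij : Commute x (θ i j))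
    (hji : Commute x (θ j i)) : Commute x (dunklTerm θ i j) := by
  unfold _root_.dunklTerm
  split_ifs
  exacts [hji, hij.neg_right, Commute.zero_right x]

lemma dunklPart_eq_add_sum {i j : Fin n} (hij : i ≠ j) :
    dunklPart θ i = dunklTerm θ i j + ∑ k ∈ ({i, j} : Finset (Fin n))ᶜ, dunklTerm θ i k := by
  rw [dunklPart, ← Finset.sum_add_sum_compl {i, j}, Finset.sum_pair hij, dunklTerm_self,
    zero_add]

lemma CDop_eq_add_dunklPart (β : ℂ) (i : Fin n) :
    CDop β θ i = β⁻¹ • Dop i + ((n : ℂ) - (i : ℕ) - 1) • 1 + dunklPart θ i := by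
  have hterm : ∀ j, dunklTerm θ i j
      = (if i < j then θ j i else 0) - (if j < i then θ i j else 0) := fun j => by
    unfold dunklTerm
    split_ifs <;> first | order | simp
  rw [CDop, dunklPart, Finset.sum_congr rfl fun j _ => hterm j, Finset.sum_sub_distrib,
    ← Finset.sum_filter, ← Finset.sum_filter, Module.End.one_eq_id, add_sub_assoc]

end DunklPart

namespace IsDividedDifference

open Finset

variable {n : ℕ} {θ : Fin n → Fin n → (Lpoly n →ₗ[ℂ] Lpoly n)} (hθ : IsDividedDifference θ)
include hθ

lemma commute_dunklTerm_dunklTerm {a b c d : Fin n} (hac : a ≠ c) (had : a ≠ d) (hbc : b ≠ c)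
    (hbd : b ≠ d) : Commute (dunklTerm θ a b) (dunklTerm θ c d) := by
  rcases eq_or_ne a b with rfl | hab
  · simp [dunklTerm_self]
  rcases eq_or_ne c d with rfl | hcd
  · simp [dunklTerm_self]
  refine .dunklTerm (.symm (.dunklTerm ?_ ?_)) (.symm (.dunklTerm ?_ ?_))
  · exact hθ.commute_theta_theta hcd hab hac.symm hbc.symm had.symm hbd.symm
  · exact hθ.commute_theta_theta hcd hab.symm hbc.symm hac.symm hbd.symm had.symm
  · exact hθ.commute_theta_theta hcd.symm hab had.symm hbd.symm hac.symm hbc.symm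
  · exact hθ.commute_theta_theta hcd.symm hab.symm hbd.symm had.symm hbc.symm hac.symm

lemma dunklTerm_lie_triple {i j k : Fin n} (hij : i < j) (hik : i ≠ k) (hjk : j ≠ k) :
    ⁅dunklTerm θ i j, dunklTerm θ j k⁆ + ⁅dunklTerm θ i k, dunklTerm θ j i⁆
      + ⁅dunklTerm θ i k, dunklTerm θ j k⁆ = 0 := by
  rcases lt_or_gt_of_ne hik with hik' | hki
  · rcases lt_or_gt_of_ne hjk with hjk' | hkj
    · have h := hθ.theta_lie_triple hik hij.ne hjk.symm
      simp only [dunklTerm, hij, hik', hjk', hij.asymm, if_true, if_false, lie_neg]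
      rw [← lie_skew (θ j i) (θ k i)] at h
      linear_combination (norm := abel) h
    · have h := hθ.theta_lie_triple hij.ne hik hjk
      simp only [dunklTerm, hij, hik', hkj, hij.asymm, hkj.asymm, if_true, if_false, lie_neg]
      linear_combination (norm := abel) -h
  · have h := hθ.theta_lie_triple (hki.trans hij).ne hki.ne hij.ne'
    simp only [dunklTerm, hij, hki, hki.trans hij, hij.asymm, hki.asymm, (hki.trans hij).asymm,
      if_true, if_false, lie_neg, neg_lie, neg_neg]
    rw [← lie_skew (θ j k) (θ j i)] at h
    linear_combination (norm := abel) h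

lemma commute_Dop_dunklTerm {p a b : Fin n} (hpa : p ≠ a) (hpb : p ≠ b) :
    Commute (Dop p) (dunklTerm θ a b) := by
  rcases eq_or_ne a b with rfl | hab
  · simp [dunklTerm_self]
  exact .dunklTerm (hθ.commute_Dop_theta hab hpa hpb) (hθ.commute_Dop_theta hab.symm hpb hpa)

lemma lie_Dop_dunklPart {i j : Fin n} (hij : i ≠ j) :
    ⁅Dop i, dunklPart θ j⁆ = ⁅Dop i, dunklTerm θ j i⁆ := by
  rw [dunklPart_eq_add_sum θ hij.symm, lie_add, lie_sum, sum_eq_zero, add_zero]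
  intro k hk
  simp only [mem_compl, mem_insert, mem_singleton, not_or] at hk
  exact (hθ.commute_Dop_dunklTerm hij (Ne.symm hk.2)).lie_eq

lemma lie_Dop_dunklPart_add_lie_dunklPart_Dop (i j : Fin n) :
    ⁅Dop i, dunklPart θ j⁆ + ⁅dunklPart θ i, Dop j⁆ = 0 := by
  rcases eq_or_ne i j with rfl | hij
  · rw [← lie_skew, neg_add_cancel]
  have hsum : Commute (Dop i + Dop j) (dunklTerm θ i j) :=
    .dunklTerm (hθ.commute_Dop_add_Dop_theta hij)
      (add_comm (Dop i) (Dop j) ▸ hθ.commute_Dop_add_Dop_theta hij.symm)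
  rw [← lie_skew (dunklPart θ i), hθ.lie_Dop_dunklPart hij, hθ.lie_Dop_dunklPart hij.symm,
    dunklTerm_swap, lie_neg, ← neg_add, ← add_lie, hsum.lie_eq, neg_zero]

lemma commute_dunklPart_of_lt {i j : Fin n} (hij : i < j) :
    Commute (dunklPart θ i) (dunklPart θ j) := by
  set S : Finset (Fin n) := {i, j}ᶜ
  have hS : ∀ k ∈ S, i ≠ k ∧ j ≠ k := fun k hk => by
    simp only [S, mem_compl, mem_insert, mem_singleton, not_or] at hk
    exact ⟨Ne.symm hk.1, Ne.symm hk.2⟩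
  have hRR : ⁅∑ k ∈ S, dunklTerm θ i k, ∑ l ∈ S, dunklTerm θ j l⁆
      = ∑ k ∈ S, ⁅dunklTerm θ i k, dunklTerm θ j k⁆ := by
    refine (sum_lie _ _ _).trans (sum_congr rfl fun k hk => ?_)
    rw [lie_sum, sum_eq_single_of_mem k hk]
    intro l hl hlk
    exact (hθ.commute_dunklTerm_dunklTerm hij.ne (hS l hl).1 (hS k hk).2.symm
      (Ne.symm hlk)).lie_eq
  suffices h : ⁅dunklPart θ i, dunklPart θ j⁆ = 0 from commute_iff_lie_eq.mpr h
  rw [dunklPart_eq_add_sum θ hij.ne, dunklPart_eq_add_sum θ hij.ne', pair_comm j i,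
    dunklTerm_swap θ i j]
  calc ⁅dunklTerm θ i j + ∑ k ∈ S, dunklTerm θ i k, -dunklTerm θ i j + ∑ l ∈ S, dunklTerm θ j l⁆
      = ∑ k ∈ S, (⁅dunklTerm θ i j, dunklTerm θ j k⁆ + ⁅dunklTerm θ i k, -dunklTerm θ i j⁆
          + ⁅dunklTerm θ i k, dunklTerm θ j k⁆) := by
        rw [add_lie, lie_add, lie_add, lie_neg, lie_self, neg_zero, zero_add, hRR, lie_sum,
          sum_lie, sum_add_distrib, sum_add_distrib, add_assoc]
    _ = 0 := sum_eq_zero fun k hk => by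
        rw [← dunklTerm_swap]
        exact hθ.dunklTerm_lie_triple hij (hS k hk).1 (hS k hk).2

lemma commute_dunklPart (i j : Fin n) : Commute (dunklPart θ i) (dunklPart θ j) := by
  rcases lt_trichotomy i j with h | rfl | h
  · exact hθ.commute_dunklPart_of_lt h
  · exact .refl _
  · exact (hθ.commute_dunklPart_of_lt h).symm

lemma commute_CDop (β : ℂ) (i j : Fin n) : Commute (CDop β θ i) (CDop β θ j) := by
  rw [CDop_eq_add_dunklPart, CDop_eq_add_dunklPart]
  exact commute_smul_add_smul_one_add _ _ _ (commute_Dop i j)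
    (hθ.lie_Dop_dunklPart_add_lie_dunklPart_Dop i j) (hθ.commute_dunklPart i j)

end IsDividedDifference

theorem stmt5_general (n : ℕ) (β : ℂ)
    (θ : Fin n → Fin n → (Lpoly n →ₗ[ℂ] Lpoly n))
    (hθ : ∀ i j : Fin n, i ≠ j → ∀ f : Lpoly n,
      (mono (Pi.single i 1) - mono (Pi.single j 1)) * θ i j f
        = mono (Pi.single i 1) * (Kop i j f - f)) :
    ∀ i j : Fin n, (CDop β θ i).comp (CDop β θ j) = (CDop β θ j).comp (CDop β θ i) :=
  fun i j => (IsDividedDifference.commute_CDop hθ β i j).eq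

/-- The Cherednik–Dunkl operators pairwise commute. -/
theorem stmt5 (n : ℕ) (β : ℂ) (hβ : β ≠ 0)
    (θ : Fin n → Fin n → (Lpoly n →ₗ[ℂ] Lpoly n))
    (hθ : ∀ i j : Fin n, i ≠ j → ∀ f : Lpoly n,
      (mono (Pi.single i 1) - mono (Pi.single j 1)) * θ i j f
        = mono (Pi.single i 1) * (Kop i j f - f)) :
    ∀ i j : Fin n, (CDop β θ i).comp (CDop β θ j) = (CDop β θ j).comp (CDop β θ i) :=
  stmt5_general n β θ hθ

end
end

section
/- For a positive real β, the eigenvalue E(k) = Σ_i b_i² + β Σ_i (2i−n−1) b_i + β²n(n²−1)/12, where b_i is the level part of k_i, separates levels: if k, l are strictly decreasing integer sequences with equal sums and the level sequence of l strictly dominates that of k (in particular is different), then E(k) ≠ E(l). -/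
/-!
Since the residues lie in `{1, …, N}`, a strictly decreasing `k` has nondecreasing levels `b`.
Let `g` be the difference of the reversed level sequences of `l` and `k`: its partial sums are
nonnegative and its total is zero, so by summation by parts `∑ w j * g j ≥ 0` for every
nonincreasing weight `w`, with strict inequality when `w` is strictly decreasing and `g ≠ 0`.
After reversing the index, `E(l) - E(k) = ∑ (d' + b') g + β ∑ (n - 1 - 2j) g`, where the first
weight is nonincreasing and the second strictly decreasing, so `E(l) > E(k)`.
-/

/-- Partial sum of the first entries of a sequence, up to index `i`. -/
def partialSum {n : ℕ} (k : Fin n → ℤ) (i : Fin n) : ℤ :=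
  ∑ j ∈ Finset.univ.filter (fun j => j ≤ i), k j

/-- Dominance relation: `domLE k l` means `k` dominates `l`. -/
def domLE {n : ℕ} (k l : Fin n → ℤ) : Prop :=
  ∀ i : Fin n, partialSum l i ≤ partialSum k i

/-- The eigenvalue `E(k) = Σ b_i² + β Σ (2i−n−1) b_i + β²n(n²−1)/12`, computed from
the level sequence `b` (here `i` is 1-indexed, so the coefficient is `2(i+1)−n−1`
for the `Fin n` index `i`). -/
noncomputable def Eval (β : ℝ) (n : ℕ) (b : Fin n → ℤ) : ℝ :=
  (∑ i : Fin n, ((b i : ℝ)) ^ 2) + β * (∑ i : Fin n, ((2 * ((i : ℕ) : ℝ) + 1) - n) * (b i : ℝ))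
    + β ^ 2 * n * (n ^ 2 - 1) / 12

open Finset

section SummationByParts

variable {R : Type*} [CommRing R] {n : ℕ} {w g : ℕ → R}

theorem sum_range_mul_eq_of_sum_eq_zero (w : ℕ → R) (h0 : ∑ j ∈ range n, g j = 0) :
    ∑ j ∈ range n, w j * g j =
      ∑ i ∈ range (n - 1), (w i - w (i + 1)) * ∑ j ∈ range (i + 1), g j := by
  have h := sum_range_by_parts w g n
  simp only [smul_eq_mul] at h
  rw [h, h0, mul_zero, zero_sub, ← sum_neg_distrib]
  exact sum_congr rfl fun i _ => by ring

variable [LinearOrder R] [IsStrictOrderedRing R]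

theorem sum_range_mul_nonneg_of_partialSums_nonneg (hw : ∀ i, i + 1 < n → w (i + 1) ≤ w i)
    (hS : ∀ m < n, 0 ≤ ∑ j ∈ range (m + 1), g j) (h0 : ∑ j ∈ range n, g j = 0) :
    0 ≤ ∑ j ∈ range n, w j * g j := by
  rw [sum_range_mul_eq_of_sum_eq_zero w h0]
  refine sum_nonneg fun i hi => mul_nonneg ?_ (hS i ?_)
  · exact sub_nonneg.mpr (hw i (by grind))
  · grind

theorem sum_range_mul_pos_of_partialSums_nonneg (hw : ∀ i, i + 1 < n → w (i + 1) < w i)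
    (hS : ∀ m < n, 0 ≤ ∑ j ∈ range (m + 1), g j) (h0 : ∑ j ∈ range n, g j = 0)
    (hg : ∃ j < n, g j ≠ 0) : 0 < ∑ j ∈ range n, w j * g j := by
  rw [sum_range_mul_eq_of_sum_eq_zero w h0]
  have hpos : ∃ i < n - 1, 0 < ∑ j ∈ range (i + 1), g j := by
    by_contra! hle
    have hzero : ∀ m ≤ n, ∑ j ∈ range m, g j = 0 := by
      rintro (_ | m) hm
      · exact sum_range_zero g
      · rcases lt_or_eq_of_le hm with hlt | rfl
        · exact le_antisymm (hle m (by omega)) (hS m (by omega))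
        · exact h0
    -- `g j` is the difference of two consecutive partial sums
    obtain ⟨j, hj, hgj⟩ := hg
    exact hgj (by simpa [sum_range_succ, hzero j hj.le] using hzero (j + 1) hj)
  obtain ⟨i, hi, hSi⟩ := hpos
  refine sum_pos' (fun i hi => mul_nonneg ?_ (hS i ?_)) ⟨i, mem_range.mpr hi, ?_⟩
  · exact sub_nonneg.mpr (hw i (by grind)).le
  · grind
  · exact mul_pos (sub_pos.mpr (hw i (by omega))) hSi

end SummationByParts

section FiniteSequences

variable {n : ℕ}

def zeroExtend {M : Type*} [Zero M] (f : Fin n → M) : ℕ → M :=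
  fun j => if h : j < n then f ⟨j, h⟩ else 0

@[simp]
theorem zeroExtend_val {M : Type*} [Zero M] (f : Fin n → M) (i : Fin n) :
    zeroExtend f i = f i := dif_pos i.isLt

theorem sum_eq_sum_range_zeroExtend {M : Type*} [AddCommMonoid M] (f : Fin n → M) :
    ∑ i, f i = ∑ j ∈ range n, zeroExtend f j := by
  simpa using Fin.sum_univ_eq_sum_range (zeroExtend f) n

theorem partialSum_eq_sum_range (f : Fin n → ℤ) (i : Fin n) :
    partialSum f i = ∑ j ∈ range (i + 1), zeroExtend f j := by
  have hrange : (range n).filter (· ≤ (i : ℕ)) = range (i + 1) := by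
    ext j; simp only [mem_filter, mem_range]; omega
  rw [partialSum, sum_filter, sum_eq_sum_range_zeroExtend, ← hrange, sum_filter]
  refine sum_congr rfl fun j hj => ?_
  simp [zeroExtend, mem_range.mp hj, Fin.le_def]

variable {w g : Fin n → ℤ}

theorem zeroExtend_succ_le_of_antitone (hw : Antitone w) {i : ℕ} (hi : i + 1 < n) :
    zeroExtend w (i + 1) ≤ zeroExtend w i := by
  simpa [zeroExtend, hi, Nat.lt_of_succ_lt hi] using hw (Fin.mk_le_mk.mpr (Nat.le_succ i))

theorem zeroExtend_succ_lt_of_strictAnti (hw : StrictAnti w) {i : ℕ} (hi : i + 1 < n) :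
    zeroExtend w (i + 1) < zeroExtend w i := by
  simpa [zeroExtend, hi, Nat.lt_of_succ_lt hi] using hw (Fin.mk_lt_mk.mpr (Nat.lt_succ_self i))

theorem sum_mul_eq_sum_range_zeroExtend :
    ∑ i, w i * g i = ∑ j ∈ range n, zeroExtend w j * zeroExtend g j := by
  simpa using Fin.sum_univ_eq_sum_range (fun j => zeroExtend w j * zeroExtend g j) n

theorem sum_range_zeroExtend_nonneg (hg : ∀ i, 0 ≤ partialSum g i) :
    ∀ m < n, 0 ≤ ∑ j ∈ range (m + 1), zeroExtend g j := fun m hm => by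
  simpa [partialSum_eq_sum_range] using hg ⟨m, hm⟩

theorem sum_mul_nonneg_of_partialSum_nonneg (hw : Antitone w) (hg : ∀ i, 0 ≤ partialSum g i)
    (h0 : ∑ i, g i = 0) : 0 ≤ ∑ i, w i * g i := by
  rw [sum_eq_sum_range_zeroExtend] at h0
  rw [sum_mul_eq_sum_range_zeroExtend]
  exact sum_range_mul_nonneg_of_partialSums_nonneg
    (fun i hi => zeroExtend_succ_le_of_antitone hw hi) (sum_range_zeroExtend_nonneg hg) h0

theorem sum_mul_pos_of_partialSum_nonneg (hw : StrictAnti w) (hg : ∀ i, 0 ≤ partialSum g i)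
    (h0 : ∑ i, g i = 0) (hne : g ≠ 0) : 0 < ∑ i, w i * g i := by
  obtain ⟨i, hi⟩ := Function.ne_iff.mp hne
  rw [sum_eq_sum_range_zeroExtend] at h0
  rw [sum_mul_eq_sum_range_zeroExtend]
  exact sum_range_mul_pos_of_partialSums_nonneg
    (fun i hi => zeroExtend_succ_lt_of_strictAnti hw hi) (sum_range_zeroExtend_nonneg hg) h0
    ⟨i, i.isLt, by simpa using hi⟩

end FiniteSequences

theorem monotone_level_of_strictAnti {N n : ℕ} {k a b : Fin n → ℤ} (hk : StrictAnti k)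
    (ha : ∀ i, 1 ≤ a i ∧ a i ≤ N) (hkd : ∀ i, k i = a i - N * b i) : Monotone b := by
  refine monotone_iff_forall_lt.mpr fun i j hij => ?_
  by_contra! hlt
  have hstep : (N : ℤ) ≤ N * (b i - b j) := le_mul_of_one_le_right (by positivity) (by omega)
  have := hk hij
  grind

theorem Fin.sum_univ_rev {M : Type*} [AddCommMonoid M] {n : ℕ} (f : Fin n → M) :
    ∑ i : Fin n, f i.rev = ∑ i, f i :=
  Equiv.sum_comp Fin.revPerm f

theorem eval_sub_eval (β : ℝ) {n : ℕ} (b d : Fin n → ℤ) :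
    Eval β n d - Eval β n b =
      ((∑ i : Fin n, (d i.rev + b i.rev) * (d i.rev - b i.rev) : ℤ) : ℝ)
        + β * ((∑ i : Fin n, ((n : ℤ) - 1 - 2 * i) * (d i.rev - b i.rev) : ℤ) : ℝ) := by
  have hquad : ∑ i : Fin n, ((d i.rev : ℝ) + b i.rev) * (d i.rev - b i.rev)
      = ∑ i, (d i : ℝ) ^ 2 - ∑ i, (b i : ℝ) ^ 2 := by
    rw [Fin.sum_univ_rev (fun i => ((d i : ℝ) + b i) * (d i - b i)), ← sum_sub_distrib]
    exact sum_congr rfl fun i _ => by ring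
  have hlin : ∑ i : Fin n, ((n : ℝ) - 1 - 2 * (i : ℕ)) * (d i.rev - b i.rev)
      = ∑ i : Fin n, (2 * ((i : ℕ) : ℝ) + 1 - n) * d i
        - ∑ i : Fin n, (2 * ((i : ℕ) : ℝ) + 1 - n) * b i := by
    rw [← Fin.sum_univ_rev
      (fun i : Fin n => ((n : ℝ) - 1 - 2 * (i : ℕ)) * (d i.rev - b i.rev)), ← sum_sub_distrib]
    refine sum_congr rfl fun i _ => ?_
    have hi : ((i.rev : ℕ) : ℝ) = n - 1 - i := by
      rw [Fin.val_rev, Nat.cast_sub i.isLt]; push_cast; ring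
    rw [hi, Fin.rev_rev]; ring
  unfold Eval
  push_cast
  linear_combination -hquad - β * hlin

theorem stmt8_general (N n : ℕ) (β : ℝ) (hβ : 0 < β)
    (k l a b c d : Fin n → ℤ)
    (hk : StrictAnti k) (hl : StrictAnti l)
    (ha : ∀ i, 1 ≤ a i ∧ a i ≤ N) (hc : ∀ i, 1 ≤ c i ∧ c i ≤ N)
    (hkd : ∀ i, k i = a i - N * b i) (hld : ∀ i, l i = c i - N * d i)
    (hlev_sum : (∑ i, d i) = ∑ i, b i)
    (hlev_dom : domLE (fun i : Fin n => d i.rev) (fun i : Fin n => b i.rev))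
    (hlev_ne : (fun i : Fin n => d i.rev) ≠ (fun i : Fin n => b i.rev)) :
    Eval β n b ≠ Eval β n d := by
  set g : Fin n → ℤ := fun i => d i.rev - b i.rev
  have hpartial : ∀ i, 0 ≤ partialSum g i := fun i => by
    simpa [g, partialSum, sum_sub_distrib] using hlev_dom i
  have hsum : ∑ i, g i = 0 := by
    simp only [g, sum_sub_distrib, Fin.sum_univ_rev d, Fin.sum_univ_rev b, hlev_sum, sub_self]
  have hne : g ≠ 0 := fun h => hlev_ne (funext fun i => sub_eq_zero.mp (congrFun h i))
  have hanti : Antitone fun i : Fin n => d i.rev + b i.rev :=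
    ((monotone_level_of_strictAnti hl hc hld).comp_antitone Fin.rev_anti).add
      ((monotone_level_of_strictAnti hk ha hkd).comp_antitone Fin.rev_anti)
  have hcoeff : StrictAnti fun i : Fin n => (n : ℤ) - 1 - 2 * i := fun i j hij => by
    simp only [Fin.lt_def] at hij ⊢; omega
  have hquad := sum_mul_nonneg_of_partialSum_nonneg hanti hpartial hsum
  have hlin := sum_mul_pos_of_partialSum_nonneg hcoeff hpartial hsum hne
  refine (sub_pos.mp ?_).ne
  rw [eval_sub_eval]
  exact add_pos_of_nonneg_of_pos (Int.cast_nonneg hquad) (mul_pos hβ (Int.cast_pos.mpr hlin))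

/-- For positive real `β` the eigenvalue separates levels: if `k, l` are strictly
decreasing integer sequences with equal sums whose level sequences are `b`, `d`
(residue parts `a i, c i ∈ {1,…,N}`), and the reversed level sequence of `l`
strictly dominates that of `k`, then `E(k) ≠ E(l)`. -/
theorem stmt8 (N n : ℕ) (hN : 0 < N) (hn : 0 < n) (β : ℝ) (hβ : 0 < β)
    (k l a b c d : Fin n → ℤ)
    (hk : StrictAnti k) (hl : StrictAnti l)
    (hsum : (∑ i, k i) = ∑ i, l i)
    (ha : ∀ i, 1 ≤ a i ∧ a i ≤ N) (hc : ∀ i, 1 ≤ c i ∧ c i ≤ N)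
    (hkd : ∀ i, k i = a i - N * b i) (hld : ∀ i, l i = c i - N * d i)
    (hlev_sum : (∑ i, d i) = ∑ i, b i)
    (hlev_dom : domLE (fun i : Fin n => d i.rev) (fun i : Fin n => b i.rev))
    (hlev_ne : (fun i : Fin n => d i.rev) ≠ (fun i : Fin n => b i.rev)) :
    Eval β n b ≠ Eval β n d :=
  stmt8_general N n β hβ k l a b c d hk hl ha hc hkd hld hlev_sum hlev_dom hlev_ne
end

section
/- The map sending an N-regular partition λ to its spin configuration ε(λ) (the sequence of residue parts of o_i + λ_i) is a bijection between the set of N-regular partitions and the set of spin configurations. -/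
/-- The level part `b` of an integer `m = a - N·b` with `a ∈ {1,…,N}`. -/
def levPart (N : ℕ) (m : ℤ) : ℤ := -((m - 1) / N)

/-- The residue part `a ∈ {1,…,N}` of an integer `m = a - N·b`. -/
def resPart (N : ℕ) (m : ℤ) : ℤ := m + N * levPart N m

/-- A partition, as a non-increasing sequence of naturals which is eventually zero. -/
def IsPartitionSeq (l : ℕ → ℕ) : Prop :=
  Antitone l ∧ ∃ M, ∀ i, M ≤ i → l i = 0

/-- `N`-regularity of a partition: successive differences are less than `N`. -/
def IsNRegular (N : ℕ) (l : ℕ → ℕ) : Prop :=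
  ∀ i, (l i : ℤ) - l (i + 1) < N

/-- A spin configuration: entries in `{1,…,N}`, eventually equal to the residue parts
of the vacuum sequence `o = (0, -1, -2, …)` (the pattern `N, N-1, …, 1` repeating). -/
def IsSpinConfig (N : ℕ) (e : ℕ → ℤ) : Prop :=
  (∀ i, 1 ≤ e i ∧ e i ≤ N) ∧ ∃ M, ∀ i, M ≤ i → e i = resPart N (-(i : ℤ))

lemma resPart_eq_emod (N : ℕ) (m : ℤ) : resPart N m = (m - 1) % N + 1 := by
  rw [resPart, levPart, Int.emod_def]; ring

lemma resPart_one_le (N : ℕ) (hN : 0 < N) (m : ℤ) : 1 ≤ resPart N m := by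
  rw [resPart_eq_emod]
  have := Int.emod_nonneg (m - 1) (by exact_mod_cast hN.ne' : (N : ℤ) ≠ 0)
  omega

lemma resPart_le (N : ℕ) (hN : 0 < N) (m : ℤ) : resPart N m ≤ N := by
  rw [resPart_eq_emod]
  have := Int.emod_lt_of_pos (m - 1) (by exact_mod_cast hN : (0:ℤ) < N)
  omega

lemma resPart_dvd (N : ℕ) (m : ℤ) : (N : ℤ) ∣ m - resPart N m := by
  rw [resPart, levPart]
  exact ⟨(m - 1) / N, by ring⟩

lemma resPart_eq_iff (N : ℕ) (hN : 0 < N) {a m : ℤ} (h1 : 1 ≤ a) (h2 : a ≤ N) :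
    resPart N m = a ↔ (N : ℤ) ∣ m - a := by
  constructor
  · rintro rfl; exact resPart_dvd N m
  · intro h
    have hd : (N : ℤ) ∣ resPart N m - a := by
      have := resPart_dvd N m
      have : (N : ℤ) ∣ (m - a) - (m - resPart N m) := dvd_sub h this
      simpa using this
    have h3 := resPart_one_le N hN m
    have h4 := resPart_le N hN m
    have := Int.eq_zero_of_abs_lt_dvd hd (by rw [abs_lt]; omega)
    omega

section Build

variable (N : ℕ) (e : ℕ → ℤ) (M : ℕ)

/-- Reverse recursion constructing the sequence `m_{M-k}` from a spin configuration. -/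
def buildAux : ℕ → ℤ
  | 0 => -(M : ℤ)
  | k + 1 => buildAux k + 1 + (e (M - (k + 1)) - buildAux k - 1) % N

lemma buildAux_step (hN : 0 < N) (k : ℕ) :
    buildAux N e M k + 1 ≤ buildAux N e M (k + 1) ∧
      buildAux N e M (k + 1) ≤ buildAux N e M k + N := by
  have h1 := Int.emod_nonneg (e (M - (k + 1)) - buildAux N e M k - 1)
    (by exact_mod_cast hN.ne' : (N : ℤ) ≠ 0)
  have h2 := Int.emod_lt_of_pos (e (M - (k + 1)) - buildAux N e M k - 1)
    (by exact_mod_cast hN : (0:ℤ) < N)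
  constructor <;> simp only [buildAux] <;> omega

lemma buildAux_ge (hN : 0 < N) (k : ℕ) : -(M : ℤ) + k ≤ buildAux N e M k := by
  induction k with
  | zero => simp [buildAux]
  | succ k ih =>
    have := (buildAux_step N e M hN k).1
    push_cast
    omega

lemma buildAux_res (hN : 0 < N) (k : ℕ) :
    (N : ℤ) ∣ buildAux N e M (k + 1) - e (M - (k + 1)) := by
  have : buildAux N e M (k + 1) - e (M - (k + 1)) =
      (e (M - (k + 1)) - buildAux N e M k - 1) % N
        - (e (M - (k + 1)) - buildAux N e M k - 1) := by
    simp only [buildAux]; ring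
  rw [this, Int.emod_def]
  exact ⟨-((e (M - (k + 1)) - buildAux N e M k - 1) / N), by ring⟩

end Build

/-- The map sending an `N`-regular partition `λ` to its spin configuration `ε(λ)`
(the residue parts of `o_i + λ_i`) is a bijection between the set of `N`-regular
partitions and the set of spin configurations. -/
theorem stmt15 (N : ℕ) (hN : 2 ≤ N) :
    Set.BijOn
      (fun l : ℕ → ℕ => fun i : ℕ => resPart N (-(i : ℤ) + l i))
      {l | IsPartitionSeq l ∧ IsNRegular N l}
      {e : ℕ → ℤ | IsSpinConfig N e} := by
  have hN0 : 0 < N := by omega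
  have hNZ : (0:ℤ) < N := by exact_mod_cast hN0
  refine ⟨?_, ?_, ?_⟩
  · -- MapsTo
    rintro l ⟨⟨hanti, M, hM⟩, hreg⟩
    refine ⟨fun i => ⟨resPart_one_le N hN0 _, resPart_le N hN0 _⟩, M, fun i hi => ?_⟩
    simp [hM i hi]
  · -- InjOn
    rintro l ⟨⟨hanti, M, hM⟩, hreg⟩ l' ⟨⟨hanti', M', hM'⟩, hreg'⟩ heq
    have key : ∀ k i, max M M' ≤ i + k → l i = l' i := by
      intro k
      induction k with
      | zero => intro i hi; rw [hM i (by omega), hM' i (by omega)]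
      | succ k ih =>
        intro i hi
        have hsucc : l (i + 1) = l' (i + 1) := ih (i + 1) (by omega)
        have he : resPart N (-(i : ℤ) + l i) = resPart N (-(i : ℤ) + l' i) :=
          congrFun heq i
        set a := resPart N (-(i : ℤ) + l' i) with ha
        have hb1 : 1 ≤ a := resPart_one_le N hN0 _
        have hb2 : a ≤ N := resPart_le N hN0 _
        have hd1 : (N : ℤ) ∣ (-(i : ℤ) + l i) - a :=
          (resPart_eq_iff N hN0 hb1 hb2).mp he
        have hd2 : (N : ℤ) ∣ (-(i : ℤ) + l' i) - a := resPart_dvd N _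
        have hd : (N : ℤ) ∣ (l i : ℤ) - l' i := by
          have := dvd_sub hd1 hd2
          simpa using this
        have ha1 : l (i + 1) ≤ l i := hanti (Nat.le_succ i)
        have ha2 : l' (i + 1) ≤ l' i := hanti' (Nat.le_succ i)
        have hr1 := hreg i
        have hr2 := hreg' i
        have hcast : (l (i+1) : ℤ) = l' (i+1) := by exact_mod_cast hsucc
        have ha1' : (l (i+1) : ℤ) ≤ l i := by exact_mod_cast ha1
        have ha2' : (l' (i+1) : ℤ) ≤ l' i := by exact_mod_cast ha2
        have := Int.eq_zero_of_abs_lt_dvd hd (by rw [abs_lt]; omega)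
        exact_mod_cast sub_eq_zero.mp this
    funext i
    exact key (max M M') i (by omega)
  · -- SurjOn
    rintro e ⟨hbd, M, hM⟩
    set b := buildAux N e M with hb
    set l : ℕ → ℕ := fun i => if M ≤ i then 0 else (b (M - i) + i).toNat with hl
    have lval : ∀ i, i ≤ M → (l i : ℤ) = b (M - i) + i := by
      intro i hi
      rcases eq_or_lt_of_le hi with rfl | hlt
      · simp [hl, hb, buildAux]
      · have hge := buildAux_ge N e M hN0 (M - i)
        rw [← hb] at hge
        have hc : ((M - i : ℕ) : ℤ) = (M : ℤ) - i := by
          push_cast [Nat.cast_sub hlt.le]; ring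
        rw [hc] at hge
        simp only [hl, if_neg (by omega : ¬ M ≤ i)]
        rw [Int.toNat_of_nonneg (by omega)]
    have lzero : ∀ i, M ≤ i → l i = 0 := fun i hi => by simp [hl, if_pos hi]
    have lstep : ∀ i, i + 1 ≤ M →
        (l (i+1) : ℤ) ≤ l i ∧ (l i : ℤ) + 1 ≤ l (i+1) + N := by
      intro i hi
      have h1 := lval i (by omega)
      have h2 := lval (i+1) hi
      have hk : M - i = (M - (i+1)) + 1 := by omega
      have hstep := buildAux_step N e M hN0 (M - (i+1))
      rw [← hb] at hstep
      rw [hk] at h1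
      push_cast at h1 h2 ⊢
      omega
    refine ⟨l, ⟨⟨?_, M, lzero⟩, ?_⟩, ?_⟩
    · -- Antitone
      apply antitone_nat_of_succ_le
      intro i
      by_cases hi : i + 1 ≤ M
      · have := (lstep i hi).1; omega
      · rw [lzero (i+1) (by omega)]; omega
    · -- N-regular
      intro i
      by_cases hi : i + 1 ≤ M
      · have := (lstep i hi).2; omega
      · rw [lzero i (by omega), lzero (i+1) (by omega)]
        push_cast; omega
    · -- image
      funext i
      show resPart N (-(i : ℤ) + (l i : ℤ)) = e i
      by_cases hi : i < M
      · have h1 := lval i hi.le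
        have hm : -(i : ℤ) + l i = b (M - i) := by omega
        rw [hm]
        have hk : M - i = (M - (i+1)) + 1 := by omega
        have hres := buildAux_res N e M hN0 (M - (i+1))
        rw [← hb] at hres
        have hidx : M - ((M - (i+1)) + 1) = i := by omega
        rw [hidx] at hres
        rw [hk]
        exact (resPart_eq_iff N hN0 (hbd i).1 (hbd i).2).mpr hres
      · rw [lzero i (by omega), hM i (by omega)]
        simp
end

section
/- There is a bijection between the set W_N of coordinate configurations with consecutive values (differences of successive entries in {0,1}, each value of multiplicity ≤ N, eventually equal to the vacuum levels) and the set R_N of rank-N ribbons whose leftmost column has height < N and whose length is divisible by N, given by m ↦ [p_1,…,p_l] where p_i are the multiplicities of the distinct values of m up to the last value of multiplicity < N. -/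
/-- The multiplicity of the value `v` in the sequence `m`. -/
noncomputable def cntVal (m : ℕ → ℤ) (v : ℤ) : ℕ := Set.ncard {i | m i = v}

/-- The number of columns of the ribbon attached to `m`: the least `l` such that
every value `m 0 + t` with `t ≥ l` has full multiplicity `N`. -/
noncomputable def ribbonLen (N : ℕ) (m : ℕ → ℤ) : ℕ :=
  sInf {l : ℕ | ∀ t : ℕ, l ≤ t → cntVal m (m 0 + t) = N}

/-- The ribbon `[p_1,…,p_l]` attached to a coordinate configuration `m`:
the list of multiplicities of the successive values of `m`, up to the last value of
multiplicity `< N` (so the head is the rightmost column and the last entry the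
leftmost column). -/
noncomputable def ribbonOf (N : ℕ) (m : ℕ → ℤ) : List ℕ :=
  List.ofFn (fun t : Fin (ribbonLen N m) => cntVal m (m 0 + (t : ℕ)))

/-- The set `W_N` of coordinate configurations with consecutive values: differences of
successive entries in `{0,1}`, each value of multiplicity `≤ N`, eventually equal
to the vacuum levels `((1)^N (2)^N (3)^N …)`. -/
def WN (N : ℕ) : Set (ℕ → ℤ) :=
  {m | (∀ i, m (i + 1) = m i ∨ m (i + 1) = m i + 1) ∧ (∀ i, m i < m (i + N)) ∧
    ∃ M, ∀ i, M ≤ i → m i = levPart N (-(i : ℤ))}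

/-- The set `R_N` of rank-`N` ribbons, encoded by their lists of column heights
(from the right): all heights in `{1,…,N}`, the leftmost column of height `< N`,
and total length divisible by `N`. -/
def RN (N : ℕ) : Set (List ℕ) :=
  {L | (∀ p ∈ L, 1 ≤ p ∧ p ≤ N) ∧ (∀ h, L.getLast? = some h → h < N) ∧ N ∣ L.sum}

lemma levPart_neg_natCast {N : ℕ} (hN : 0 < N) (i : ℕ) :
    levPart N (-(i : ℤ)) = (i / N : ℕ) + 1 := by
  have hdiv : (-(i : ℤ) - 1) / N = -((i / N : ℕ) : ℤ) - 1 := by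
    rw [Int.ediv_eq_iff_of_pos (by exact_mod_cast hN)]
    have h₁ : ((i / N * N : ℕ) : ℤ) ≤ i := by exact_mod_cast Nat.div_mul_le_self i N
    have h₂ : (i : ℤ) < ((i / N * N + N : ℕ) : ℤ) := by exact_mod_cast Nat.lt_div_mul_add hN
    push_cast at h₁ h₂ ⊢
    constructor <;> linarith
  rw [levPart, hdiv]
  ring

def cumSum (p : ℕ → ℕ) (t : ℕ) : ℕ := ∑ u ∈ Finset.range t, p u

/-- The entry at position `i` of the non-decreasing sequence `0, …, 0, 1, …, 1, …` in which `t`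
occurs `p t` times. -/
noncomputable def level (p : ℕ → ℕ) (i : ℕ) : ℕ := sInf {t | i < cumSum p (t + 1)}

noncomputable def tailStart (N : ℕ) (p : ℕ → ℕ) : ℕ := sInf {l | ∀ t, l ≤ t → p t = N}

section cumSum

variable {N : ℕ} {p : ℕ → ℕ}

@[simp] lemma cumSum_zero : cumSum p 0 = 0 := rfl

lemma cumSum_succ (t : ℕ) : cumSum p (t + 1) = cumSum p t + p t :=
  Finset.sum_range_succ _ _

lemma cumSum_add_of_forall_eq {l : ℕ} (h : ∀ t, l ≤ t → p t = N) (j : ℕ) :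
    cumSum p (l + j) = cumSum p l + j * N := by
  induction j with
  | zero => simp
  | succ j ih => rw [← add_assoc, cumSum_succ, ih, h _ (by omega)]; ring

lemma cumSum_level_le (i : ℕ) : cumSum p (level p i) ≤ i := by
  by_contra! h
  have h0 : level p i ≠ 0 := by rintro h0; simp [h0] at h
  have : level p i ≤ level p i - 1 :=
    Nat.sInf_le (by simpa [Nat.sub_add_cancel (Nat.one_le_iff_ne_zero.2 h0)] using h)
  omega

variable (hp : ∀ u, 0 < p u)
include hp

lemma cumSum_strictMono : StrictMono (cumSum p) :=
  strictMono_nat_of_lt_succ fun t => by rw [cumSum_succ]; exact Nat.lt_add_of_pos_right (hp t)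

lemma lt_cumSum_level_succ (i : ℕ) : i < cumSum p (level p i + 1) :=
  Nat.sInf_mem (s := {t | i < cumSum p (t + 1)})
    ⟨i, (Nat.lt_succ_self i).trans_le ((cumSum_strictMono hp).id_le (i + 1))⟩

lemma level_eq_iff {i t : ℕ} : level p i = t ↔ cumSum p t ≤ i ∧ i < cumSum p (t + 1) := by
  refine ⟨by rintro rfl; exact ⟨cumSum_level_le i, lt_cumSum_level_succ hp i⟩, fun ⟨h₁, h₂⟩ => ?_⟩
  have := (cumSum_strictMono hp).lt_iff_lt.1 ((cumSum_level_le i).trans_lt h₂)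
  have := (cumSum_strictMono hp).lt_iff_lt.1 (h₁.trans_lt (lt_cumSum_level_succ hp i))
  omega

lemma level_zero : level p 0 = 0 :=
  (level_eq_iff hp).2 ⟨le_rfl, by simpa [cumSum_succ] using hp 0⟩

lemma level_succ (i : ℕ) : level p (i + 1) = level p i ∨ level p (i + 1) = level p i + 1 := by
  have h₁ := cumSum_level_le (p := p) i
  have h₂ := lt_cumSum_level_succ hp i
  rcases (show i + 1 ≤ _ from h₂).lt_or_eq with h | h
  · exact .inl ((level_eq_iff hp).2 ⟨by omega, h⟩)
  · refine .inr ((level_eq_iff hp).2 ⟨h.ge, ?_⟩)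
    rw [h]
    exact cumSum_strictMono hp (Nat.lt_succ_self _)

lemma level_lt_level_add (hpN : ∀ u, p u ≤ N) (i : ℕ) : level p i < level p (i + N) := by
  have h := (cumSum_level_le (p := p) i).trans_lt (lt_cumSum_level_succ hp i)
  have : cumSum p (level p i + 1) < cumSum p (level p (i + N) + 1) := by
    have := lt_cumSum_level_succ hp (i + N)
    have := cumSum_level_le (p := p) i
    have := hpN (level p i)
    rw [cumSum_succ]
    omega
  simpa using (cumSum_strictMono hp).lt_iff_lt.1 this

lemma ncard_level_eq (t : ℕ) : {i | level p i = t}.ncard = p t := by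
  have : {i | level p i = t} = Set.Ico (cumSum p t) (cumSum p (t + 1)) := by
    ext i
    simp [level_eq_iff hp]
  rw [this, Set.ncard_Ico_nat, cumSum_succ]
  omega

lemma level_cumSum_add (hN : 0 < N) {l : ℕ} (h : ∀ t, l ≤ t → p t = N) (j : ℕ) :
    level p (cumSum p l + j) = l + j / N := by
  rw [level_eq_iff hp, add_assoc, cumSum_add_of_forall_eq h, cumSum_add_of_forall_eq h]
  have := Nat.div_mul_le_self j N
  have := Nat.lt_div_mul_add (a := j) hN
  constructor <;> [omega; (rw [add_mul]; omega)]

end cumSum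

lemma sum_ofFn_eq_cumSum (p : ℕ → ℕ) (l : ℕ) :
    (List.ofFn fun t : Fin l => p t).sum = cumSum p l := by
  rw [List.sum_ofFn, Fin.sum_univ_eq_sum_range (fun t => p t), cumSum]

lemma List.ofFn_getD_length (L : List ℕ) (N : ℕ) :
    List.ofFn (fun t : Fin L.length => L.getD t N) = L :=
  List.ext_getElem (by simp) fun t _ _ => by simp

section tailStart

variable {N : ℕ} {p : ℕ → ℕ}

lemma eq_of_tailStart_le (h : ∃ l, ∀ t, l ≤ t → p t = N) {t : ℕ} (ht : tailStart N p ≤ t) :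
    p t = N :=
  Nat.sInf_mem h t ht

lemma ne_of_tailStart_pred (h : ∃ l, ∀ t, l ≤ t → p t = N) (hl : 0 < tailStart N p) :
    p (tailStart N p - 1) ≠ N := fun hne =>
  Nat.notMem_of_lt_sInf (Nat.sub_one_lt hl.ne') fun _ ht =>
    (eq_or_lt_of_le ht).elim (· ▸ hne) fun ht => eq_of_tailStart_le h (Nat.le_of_pred_lt ht)

lemma getD_ofFn_tailStart (h : ∃ l, ∀ t, l ≤ t → p t = N) (u : ℕ) :
    (List.ofFn fun t : Fin (tailStart N p) => p t).getD u N = p u := by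
  rcases lt_or_ge u (tailStart N p) with hu | hu
  · simp [hu]
  · rw [List.getD_eq_default _ _ (by simpa using hu), eq_of_tailStart_le h hu]

lemma tailStart_getD {L : List ℕ} (hL : ∀ h, L.getLast? = some h → h ≠ N) :
    tailStart N (L.getD · N) = L.length := by
  have hmem : L.length ∈ {l | ∀ t, l ≤ t → L.getD t N = N} :=
    fun t ht => List.getD_eq_default _ _ ht
  refine le_antisymm (Nat.sInf_le hmem) (not_lt.1 fun hlt => ?_)
  have hlast := Nat.sInf_mem ⟨_, hmem⟩ (L.length - 1) (Nat.le_sub_one_of_lt hlt)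
  rw [List.getD_eq_getElem _ _ (by omega)] at hlast
  exact hL _ (by rw [List.getLast?_eq_getElem?, List.getElem?_eq_getElem]) hlast

end tailStart

/-- The configuration with ribbon `L`: it takes the value `c + t` exactly `L.getD t N` times,
where the offset `c` is forced by the length formula `L.sum = N * (c + L.length - 1)`. -/
noncomputable def configOf (N : ℕ) (L : List ℕ) (i : ℕ) : ℤ :=
  ((L.sum / N : ℕ) : ℤ) - L.length + 1 + level (L.getD · N) i

section configOf

variable {N : ℕ} {L : List ℕ}

lemma getD_pos_of_mem_RN (hN : 0 < N) (hL : L ∈ RN N) (u : ℕ) : 0 < L.getD u N := by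
  rcases lt_or_ge u L.length with hu | hu
  · rw [List.getD_eq_getElem _ _ hu]; exact (hL.1 _ (List.getElem_mem hu)).1
  · rwa [List.getD_eq_default _ _ hu]

lemma getD_le_of_mem_RN (hL : L ∈ RN N) (u : ℕ) : L.getD u N ≤ N := by
  rcases lt_or_ge u L.length with hu | hu
  · rw [List.getD_eq_getElem _ _ hu]; exact (hL.1 _ (List.getElem_mem hu)).2
  · rw [List.getD_eq_default _ _ hu]

lemma cumSum_getD_length (L : List ℕ) (N : ℕ) : cumSum (L.getD · N) L.length = L.sum := by
  rw [← sum_ofFn_eq_cumSum, List.ofFn_getD_length]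

lemma configOf_zero (hN : 0 < N) (hL : L ∈ RN N) :
    configOf N L 0 = ((L.sum / N : ℕ) : ℤ) - L.length + 1 := by
  rw [configOf, level_zero (getD_pos_of_mem_RN hN hL), Nat.cast_zero, add_zero]

lemma configOf_vacuum (hN : 0 < N) (hL : L ∈ RN N) {i : ℕ} (hi : L.sum ≤ i) :
    configOf N L i = levPart N (-(i : ℤ)) := by
  obtain ⟨k, hk⟩ := hL.2.2
  obtain ⟨j, rfl⟩ := Nat.exists_eq_add_of_le hi
  have hlevel := level_cumSum_add (getD_pos_of_mem_RN hN hL) hN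
    (fun t ht => List.getD_eq_default L N ht) j
  rw [cumSum_getD_length] at hlevel
  rw [configOf, hlevel, levPart_neg_natCast hN, hk, Nat.mul_add_div hN,
    Nat.mul_div_cancel_left _ hN]
  push_cast
  ring

lemma configOf_mem_WN (hN : 0 < N) (hL : L ∈ RN N) : configOf N L ∈ WN N := by
  refine ⟨fun i => ?_, fun i => ?_, L.sum, fun _ => configOf_vacuum hN hL⟩
  · rcases level_succ (getD_pos_of_mem_RN hN hL) i with h | h
    · left; rw [configOf, configOf, h]
    · right; rw [configOf, configOf, h]; push_cast; ring
  · have := level_lt_level_add (getD_pos_of_mem_RN hN hL) (getD_le_of_mem_RN hL) i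
    simp only [configOf]
    omega

lemma ribbonOf_configOf (hN : 0 < N) (hL : L ∈ RN N) : ribbonOf N (configOf N L) = L := by
  have hcnt : ∀ t : ℕ, cntVal (configOf N L) (configOf N L 0 + t) = L.getD t N := fun t => by
    rw [cntVal, ← ncard_level_eq (getD_pos_of_mem_RN hN hL) t, configOf_zero hN hL]
    congr 1
    ext i
    simp only [configOf, Set.mem_ofPred_eq, add_right_inj, Nat.cast_inj]
  have hlen : ribbonLen N (configOf N L) = L.length := by
    change tailStart N (fun t => cntVal (configOf N L) (configOf N L 0 + t)) = _
    rw [funext hcnt]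
    exact tailStart_getD fun h hh => (hL.2.1 h hh).ne
  rw [ribbonOf]
  simp only [hcnt]
  rw [hlen]
  exact L.ofFn_getD_length N

end configOf

lemma Monotone.setOf_lt_eq_Iio_ncard {α : Type*} [LinearOrder α] {m : ℕ → α} (hm : Monotone m)
    {v : α} (h : ∃ J, v ≤ m J) : {j | m j < v} = Set.Iio {j | m j < v}.ncard := by
  have key : {j | m j < v} = Set.Iio (Nat.find h) := Set.ext fun j =>
    ⟨fun hj => not_le.1 fun hle => ((Nat.find_spec h).trans (hm hle)).not_gt hj,
      fun hj => not_le.1 (Nat.find_min h hj)⟩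
  rw [key, Set.ncard_Iio_nat]

noncomputable def cntBelow (m : ℕ → ℤ) (v : ℤ) : ℕ := {j | m j < v}.ncard

noncomputable def colHeight (m : ℕ → ℤ) (t : ℕ) : ℕ := cntVal m (m 0 + t)

namespace WN

variable {N : ℕ} {m : ℕ → ℤ}

lemma monotone (hm : m ∈ WN N) : Monotone m :=
  monotone_nat_of_le_succ fun i => by rcases hm.1 i with h | h <;> omega

lemma exists_le (hN : 0 < N) (hm : m ∈ WN N) (v : ℤ) : ∃ J, v ≤ m J := by
  obtain ⟨-, -, M, hM⟩ := hm
  refine ⟨max M (v.toNat * N), ?_⟩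
  rw [hM _ (le_max_left _ _), levPart_neg_natCast hN]
  have : v.toNat ≤ max M (v.toNat * N) / N := (Nat.le_div_iff_mul_le hN).2 (le_max_right _ _)
  omega

lemma lt_iff_lt_cntBelow (hN : 0 < N) (hm : m ∈ WN N) {j : ℕ} {v : ℤ} :
    m j < v ↔ j < cntBelow m v :=
  Set.ext_iff.1 ((monotone hm).setOf_lt_eq_Iio_ncard (exists_le hN hm v)) j

lemma cntVal_eq_sub (hN : 0 < N) (hm : m ∈ WN N) (v : ℤ) :
    cntVal m v = cntBelow m (v + 1) - cntBelow m v := by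
  have : {j | m j = v} = Set.Ico (cntBelow m v) (cntBelow m (v + 1)) := Set.ext fun j => by
    simp only [Set.mem_ofPred_eq, Set.mem_Ico, ← not_lt, ← lt_iff_lt_cntBelow hN hm]
    omega
  rw [cntVal, this, Set.ncard_Ico_nat]

lemma cntBelow_succ (hN : 0 < N) (hm : m ∈ WN N) (v : ℤ) :
    cntBelow m (v + 1) = cntBelow m v + cntVal m v := by
  have : cntBelow m v ≤ cntBelow m (v + 1) := not_lt.1 fun h => by
    have := (lt_iff_lt_cntBelow hN hm).2 h
    have := (lt_iff_lt_cntBelow hN hm (j := cntBelow m (v + 1)) (v := v + 1)).1 (by omega)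
    omega
  rw [cntVal_eq_sub hN hm]
  omega

lemma cntVal_le (hN : 0 < N) (hm : m ∈ WN N) (v : ℤ) : cntVal m v ≤ N := by
  rw [cntVal_eq_sub hN hm]
  by_contra! h
  have h₁ : ¬ m (cntBelow m v) < v := fun h' => lt_irrefl _ ((lt_iff_lt_cntBelow hN hm).1 h')
  have h₂ : m (cntBelow m v + N) < v + 1 := (lt_iff_lt_cntBelow hN hm).2 (by omega)
  have := hm.2.1 (cntBelow m v)
  omega

lemma cntVal_pos (hN : 0 < N) (hm : m ∈ WN N) {v : ℤ} (hv : m 0 ≤ v) : 0 < cntVal m v := by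
  have : m (cntBelow m v) ≤ v := by
    rcases h : cntBelow m v with _ | k
    · exact hv
    · have := (lt_iff_lt_cntBelow hN hm (j := k) (v := v)).2 (by omega)
      rcases hm.1 k with e | e <;> omega
  have := (lt_iff_lt_cntBelow hN hm (j := cntBelow m v) (v := v + 1)).1 (by omega)
  rw [cntVal_eq_sub hN hm]
  omega

lemma cntBelow_eventually (hN : 0 < N) (hm : m ∈ WN N) :
    ∃ V : ℤ, ∀ v, V ≤ v → (cntBelow m v : ℤ) = (v - 1) * N := by
  have hmono := monotone hm
  obtain ⟨-, -, M, hM⟩ := hm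
  refine ⟨M + 2, fun v hv => ?_⟩
  have hset : {j | m j < v} = Set.Iio ((v - 1).toNat * N) := Set.ext fun j => by
    simp only [Set.mem_ofPred_eq, Set.mem_Iio]
    rcases lt_or_ge j M with hj | hj
    · have h₁ := hmono hj.le
      rw [hM M le_rfl, levPart_neg_natCast hN] at h₁
      have := Nat.div_le_self M N
      have := Nat.le_mul_of_pos_right (v - 1).toNat hN
      omega
    · rw [hM j hj, levPart_neg_natCast hN, ← Nat.div_lt_iff_lt_mul hN]
      omega
  rw [cntBelow, hset, Set.ncard_Iio_nat]
  push_cast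
  rw [Int.toNat_of_nonneg (by omega)]

lemma cntBelow_add_eq_cumSum (hN : 0 < N) (hm : m ∈ WN N) (t : ℕ) :
    cntBelow m (m 0 + t) = cumSum (colHeight m) t := by
  induction t with
  | zero =>
    exact Nat.eq_zero_of_not_pos fun h => by simpa using (lt_iff_lt_cntBelow hN hm (j := 0)).2 h
  | succ t ih => rw [Nat.cast_succ, ← add_assoc, cntBelow_succ hN hm, ih, cumSum_succ, colHeight]

lemma colHeight_pos (hN : 0 < N) (hm : m ∈ WN N) (t : ℕ) : 0 < colHeight m t :=
  cntVal_pos hN hm (by omega)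

lemma eq_add_level (hN : 0 < N) (hm : m ∈ WN N) (i : ℕ) :
    m i = m 0 + level (colHeight m) i := by
  have h0 : m 0 ≤ m i := monotone hm (Nat.zero_le i)
  have hlevel : level (colHeight m) i = (m i - m 0).toNat := by
    rw [level_eq_iff (colHeight_pos hN hm), ← cntBelow_add_eq_cumSum hN hm,
      ← cntBelow_add_eq_cumSum hN hm, ← not_lt, ← lt_iff_lt_cntBelow hN hm,
      ← lt_iff_lt_cntBelow hN hm]
    omega
  rw [hlevel]
  omega

lemma colHeight_eventually (hN : 0 < N) (hm : m ∈ WN N) :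
    ∃ T, ∀ t, T ≤ t → colHeight m t = N := by
  obtain ⟨V, hV⟩ := cntBelow_eventually hN hm
  refine ⟨(V - m 0).toNat, fun t ht => ?_⟩
  have h₁ := hV (m 0 + t) (by omega)
  have h₂ := hV (m 0 + t + 1) (by omega)
  have h₃ := cntBelow_succ hN hm (m 0 + t)
  have : (colHeight m t : ℤ) = N := by rw [colHeight]; push_cast [h₃] at h₂; linarith
  exact_mod_cast this

lemma sum_ribbonOf (hN : 0 < N) (hm : m ∈ WN N) :
    ((ribbonOf N m).sum : ℤ) = N * (m 0 + ribbonLen N m - 1) := by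
  obtain ⟨V, hV⟩ := cntBelow_eventually hN hm
  have hsum : (ribbonOf N m).sum = cumSum (colHeight m) (ribbonLen N m) :=
    sum_ofFn_eq_cumSum (colHeight m) _
  set j := (V - m 0 - ribbonLen N m).toNat
  have htail : cumSum (colHeight m) (ribbonLen N m + j) =
      cumSum (colHeight m) (ribbonLen N m) + j * N :=
    cumSum_add_of_forall_eq (fun _ ht => eq_of_tailStart_le (colHeight_eventually hN hm) ht) j
  have := hV (m 0 + (ribbonLen N m + j : ℕ)) (by push_cast; omega)
  rw [cntBelow_add_eq_cumSum hN hm, htail, ← hsum, Nat.cast_add, Nat.cast_mul, Nat.cast_add] at this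
  linarith

end WN

section

variable {N : ℕ} {m : ℕ → ℤ}

lemma ribbonOf_mem_RN (hN : 0 < N) (hm : m ∈ WN N) : ribbonOf N m ∈ RN N := by
  have htail := WN.colHeight_eventually hN hm
  refine ⟨fun p hp => ?_, fun h hh => ?_, ?_⟩
  · obtain ⟨t, rfl⟩ := List.mem_ofFn.1 hp
    exact ⟨WN.colHeight_pos hN hm t, WN.cntVal_le hN hm _⟩
  · rw [List.getLast?_eq_getElem?, List.getElem?_eq_some_iff] at hh
    obtain ⟨hlt, rfl⟩ := hh
    simp only [ribbonOf, List.length_ofFn, List.getElem_ofFn] at hlt ⊢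
    exact lt_of_le_of_ne (WN.cntVal_le hN hm _) (ne_of_tailStart_pred htail (Nat.zero_lt_of_lt hlt))
  · exact Int.natCast_dvd_natCast.1 ⟨_, WN.sum_ribbonOf hN hm⟩

lemma configOf_ribbonOf (hN : 0 < N) (hm : m ∈ WN N) : configOf N (ribbonOf N m) = m := by
  have hget : ((ribbonOf N m).getD · N) = colHeight m :=
    funext (getD_ofFn_tailStart (WN.colHeight_eventually hN hm))
  have hdiv : (((ribbonOf N m).sum / N : ℕ) : ℤ) = m 0 + ribbonLen N m - 1 := by
    rw [Int.natCast_div, WN.sum_ribbonOf hN hm,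
      Int.mul_ediv_cancel_left _ (by exact_mod_cast hN.ne')]
  funext i
  rw [configOf, hget, hdiv, ribbonOf, List.length_ofFn, WN.eq_add_level hN hm i]
  ring

end

/-- The map `m ↦ [p_1,…,p_l]` sending a coordinate configuration to the list of
multiplicities of its distinct values (up to the last value of multiplicity `< N`)
is a bijection from `W_N` onto `R_N`. -/
theorem stmt17 (N : ℕ) (hN : 2 ≤ N) :
    Set.BijOn (ribbonOf N) (WN N) (RN N) := by
  have hN₀ : 0 < N := by omega
  exact Set.InvOn.bijOn
    ⟨fun m hm => configOf_ribbonOf hN₀ hm, fun L hL => ribbonOf_configOf hN₀ hL⟩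
    (fun m hm => ribbonOf_mem_RN hN₀ hm) (fun L hL => configOf_mem_WN hN₀ hL)
end
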